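/- Let φ : ℝ → ℝ be twice continuously differentiable on [a,b] with a < b. Then T_φ(a,b) = ((b-a)²/48) ∫_0^1 t(2-3t)[φ''(a·t/2 + b·(1-t/2)) + φ''(b·t/2 + a·(1-t/2))] dt. -/

import Mathlib

/-!
With `m = (a + b) / 2` and `s = (b - a) / 2`, integrate the kernel `k t = t (2 - 3t)` by parts
twice against `g''` on `[0, 1]`, for `g t = φ (a + s t)` and for `g t = φ (b - s t)`. Since
`k 0 = 0`, `k' 0 = 2`, `k 1 = -1`, `k' 1 = -4` and `k'' = -6`, each half gives
`s² ∫ k φ''(…) = 2 φ(endpoint) + 4 φ m ∓ s φ' m - 6 ∫₀¹ g`. Adding the two halves cancels the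
`φ' m` terms, and the two integrals `∫₀¹ g` add up to `(2 / (b - a)) ∫ₐᵇ φ`.
-/

open Set intervalIntegral
open MeasureTheory (volume)

theorem integral_simpson_kernel_mul_second_deriv {g g' g'' : ℝ → ℝ}
    (hg : ∀ x ∈ Icc (0 : ℝ) 1, HasDerivWithinAt g (g' x) (Icc 0 1) x)
    (hg' : ∀ x ∈ Icc (0 : ℝ) 1, HasDerivWithinAt g' (g'' x) (Icc 0 1) x)
    (hg'' : ContinuousOn g'' (Icc 0 1)) :
    ∫ t in (0 : ℝ)..1, t * (2 - 3 * t) * g'' t =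
      2 * g 0 + 4 * g 1 - g' 1 - 6 * ∫ t in (0 : ℝ)..1, g t := by
  have hgc : ContinuousOn g (Icc 0 1) := fun x hx => (hg x hx).continuousWithinAt
  have hg'c : ContinuousOn g' (Icc 0 1) := fun x hx => (hg' x hx).continuousWithinAt
  have hint_g : IntervalIntegrable g volume 0 1 :=
    hgc.intervalIntegrable_of_Icc zero_le_one
  have hkc : Continuous fun t : ℝ => t * (2 - 3 * t) := by fun_prop
  have hint_kg'' : IntervalIntegrable (fun t => t * (2 - 3 * t) * g'' t) volume 0 1 :=
    (hkc.continuousOn.mul hg'').intervalIntegrable_of_Icc zero_le_one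
  -- Integration by parts twice: `t (2 - 3t) g' - (2 - 6t) g` is a primitive of
  -- `t (2 - 3t) g'' + 6 g`.
  have hFTC : ∫ t in (0 : ℝ)..1, (t * (2 - 3 * t) * g'' t + 6 * g t) =
      (1 * (2 - 3 * 1) * g' 1 - (2 - 6 * 1) * g 1) -
        (0 * (2 - 3 * 0) * g' 0 - (2 - 6 * 0) * g 0) := by
    refine integral_eq_sub_of_hasDerivAt_of_le
      (f := fun t => t * (2 - 3 * t) * g' t - (2 - 6 * t) * g t) zero_le_one
      ((hkc.continuousOn.mul hg'c).sub
        ((by fun_prop : Continuous fun t : ℝ => 2 - 6 * t).continuousOn.mul hgc))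
      (fun x hx => ?_) (hint_kg''.add (hint_g.const_mul 6))
    have hnhds := Icc_mem_nhds hx.1 hx.2
    have hgx := (hg x (Ioo_subset_Icc_self hx)).hasDerivAt hnhds
    have hg'x := (hg' x (Ioo_subset_Icc_self hx)).hasDerivAt hnhds
    have hk : HasDerivAt (fun t : ℝ => t * (2 - 3 * t)) (2 - 6 * x) x :=
      ((hasDerivAt_id' x).fun_mul (((hasDerivAt_id' x).const_mul 3).const_sub 2)).congr_deriv
        (by ring)
    have hk' : HasDerivAt (fun t : ℝ => 2 - 6 * t) (-6) x := by
      simpa using ((hasDerivAt_id' x).const_mul 6).const_sub 2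
    exact ((hk.fun_mul hg'x).fun_sub (hk'.fun_mul hgx)).congr_deriv (by ring)
  rw [integral_add hint_kg'' (hint_g.const_mul 6), integral_const_mul] at hFTC
  linarith

theorem HasDerivWithinAt.comp_const_add_mul {f : ℝ → ℝ} {f' c d t : ℝ} {S T : Set ℝ}
    (hf : HasDerivWithinAt f f' S (c + d * t)) (hT : MapsTo (fun t => c + d * t) T S) :
    HasDerivWithinAt (fun t => f (c + d * t)) (d * f') T t := by
  have haff : HasDerivWithinAt (fun t => c + d * t) d T t := by
    simpa using ((hasDerivWithinAt_id t T).const_mul d).const_add c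
  rw [mul_comm]
  exact hf.comp t haff hT

theorem integral_simpson_kernel_mul_second_deriv_comp {φ φ' φ'' : ℝ → ℝ} {S : Set ℝ} {c d : ℝ}
    (hS : MapsTo (fun t => c + d * t) (Icc 0 1) S)
    (hφ' : ∀ x ∈ S, HasDerivWithinAt φ (φ' x) S x)
    (hφ'' : ∀ x ∈ S, HasDerivWithinAt φ' (φ'' x) S x)
    (hcont : ContinuousOn φ'' S) :
    d ^ 2 * ∫ t in (0 : ℝ)..1, t * (2 - 3 * t) * φ'' (c + d * t) =
      2 * φ c + 4 * φ (c + d) - d * φ' (c + d) - 6 * ∫ t in (0 : ℝ)..1, φ (c + d * t) := by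
  have key := integral_simpson_kernel_mul_second_deriv
    (g' := fun t => d * φ' (c + d * t)) (g'' := fun t => d * (d * φ'' (c + d * t)))
    (fun t ht => (hφ' _ (hS ht)).comp_const_add_mul hS)
    (fun t ht => ((hφ'' _ (hS ht)).comp_const_add_mul hS).const_mul d)
    (continuousOn_const.mul (continuousOn_const.mul (hcont.comp (by fun_prop) hS)))
  rw [← integral_const_mul]
  simp only [mul_zero, add_zero, mul_one] at key
  rw [← key]
  congr 1 with t
  ring

theorem integral_eq_mul_integral_comp_halves {f : ℝ → ℝ} {c d : ℝ}
    (hf : IntervalIntegrable f volume c (c + 2 * d)) :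
    ∫ x in c..c + 2 * d, f x =
      d * ((∫ t in (0 : ℝ)..1, f (c + d * t)) + ∫ t in (0 : ℝ)..1, f (c + 2 * d + -d * t)) := by
  have hleft := smul_integral_comp_add_mul f d c (a := 0) (b := 1)
  have hright := smul_integral_comp_add_mul f (-d) (c + 2 * d) (a := 0) (b := 1)
  simp only [smul_eq_mul, mul_zero, add_zero, mul_one] at hleft hright
  rw [show c + 2 * d + -d = c + d by ring] at hright
  have hmid_mem : c + d ∈ uIcc c (c + 2 * d) := by
    rcases le_total 0 d with hd | hd
    · exact mem_uIcc.2 (Or.inl ⟨by linarith, by linarith⟩)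
    · exact mem_uIcc.2 (Or.inr ⟨by linarith, by linarith⟩)
  rw [← integral_add_adjacent_intervals (hf.mono_set (uIcc_subset_uIcc_left hmid_mem))
    (hf.mono_set (uIcc_subset_uIcc_right hmid_mem)), integral_symm (c + 2 * d) (c + d), ← hright,
    ← hleft]
  ring

theorem intervalIntegrable_simpson_kernel_mul_comp {ψ : ℝ → ℝ} {S : Set ℝ} {c d : ℝ}
    (hψ : ContinuousOn ψ S) (hS : MapsTo (fun t => c + d * t) (Icc 0 1) S) :
    IntervalIntegrable (fun t => t * (2 - 3 * t) * ψ (c + d * t)) volume 0 1 :=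
  ContinuousOn.intervalIntegrable_of_Icc zero_le_one
    ((by fun_prop : Continuous fun t : ℝ => t * (2 - 3 * t)).continuousOn.mul
      (hψ.comp (by fun_prop) hS))

theorem simpson_stmt5 (a b : ℝ) (hab : a < b) (φ φ' φ'' : ℝ → ℝ)
    (hφ' : ∀ x ∈ Set.Icc a b, HasDerivWithinAt φ (φ' x) (Set.Icc a b) x)
    (hφ'' : ∀ x ∈ Set.Icc a b, HasDerivWithinAt φ' (φ'' x) (Set.Icc a b) x)
    (hcont : ContinuousOn φ'' (Set.Icc a b)) :
    (φ a + φ b) / 6 + 2 / 3 * φ ((a + b) / 2) - (1 / (b - a)) * ∫ t in a..b, φ t =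
      ((b - a) ^ 2 / 48) *
        ∫ t in (0:ℝ)..1, t * (2 - 3 * t) *
          (φ'' (a * (t / 2) + b * (1 - t / 2)) + φ'' (b * (t / 2) + a * (1 - t / 2))) := by
  obtain ⟨s, rfl⟩ : ∃ s, b = a + 2 * s := ⟨(b - a) / 2, by ring⟩
  have hs : 0 < s := by linarith
  have hA : MapsTo (fun t => a + s * t) (Icc 0 1) (Icc a (a + 2 * s)) :=
    fun t ⟨h0, h1⟩ => ⟨by nlinarith, by nlinarith⟩
  have hB : MapsTo (fun t => a + 2 * s + -s * t) (Icc 0 1) (Icc a (a + 2 * s)) :=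
    fun t ⟨h0, h1⟩ => ⟨by nlinarith, by nlinarith⟩
  have kA := integral_simpson_kernel_mul_second_deriv_comp hA hφ' hφ'' hcont
  have kB := integral_simpson_kernel_mul_second_deriv_comp hB hφ' hφ'' hcont
  have hφc : ContinuousOn φ (Icc a (a + 2 * s)) := fun x hx => (hφ' x hx).continuousWithinAt
  have hmean := integral_eq_mul_integral_comp_halves (hφc.intervalIntegrable_of_Icc (by linarith))
  have hsplit : ∫ t in (0:ℝ)..1, t * (2 - 3 * t) * (φ'' (a * (t / 2) + (a + 2 * s) * (1 - t / 2)) +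
        φ'' ((a + 2 * s) * (t / 2) + a * (1 - t / 2))) =
      (∫ t in (0:ℝ)..1, t * (2 - 3 * t) * φ'' (a + 2 * s + -s * t)) +
        ∫ t in (0:ℝ)..1, t * (2 - 3 * t) * φ'' (a + s * t) := by
    rw [← integral_add (intervalIntegrable_simpson_kernel_mul_comp hcont hB)
      (intervalIntegrable_simpson_kernel_mul_comp hcont hA)]
    congr 1 with t
    rw [show a * (t / 2) + (a + 2 * s) * (1 - t / 2) = a + 2 * s + -s * t by ring,
      show (a + 2 * s) * (t / 2) + a * (1 - t / 2) = a + s * t by ring]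
    ring
  rw [show a + 2 * s + -s = a + s by ring] at kB
  have havg : ∀ X, 1 / (a + 2 * s - a) * (s * X) = X / 2 := fun X => by field_simp; ring
  rw [hsplit, hmean, havg, show (a + (a + 2 * s)) / 2 = a + s by ring]
  linear_combination -(kA + kB) / 12
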